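/- arXiv:2309.05690 — 4 statements merged into one kernel-verified Lean document; each statement's English description precedes it below -/
import Mathlib

section
/- For any subset A of the Pauli strings P_n, the Lie algebra generated by iA inside su(2ⁿ) has a basis consisting of Pauli strings times i; that is, Lie⟨A⟩ equals the real linear span of iP_n ∩ Lie⟨A⟩. -/
/-!
The bracket of two elements of `i P_n` is a real multiple of an element of `i P_n`: the two
products of Pauli strings are the same Pauli string with complex-conjugate phases. Hence, for
`G = Lie⟨A⟩ ∩ i P_n`, a nonzero bracket of elements of `G` is a nonzero multiple of an element of
`i P_n` lying in `Lie⟨A⟩`, i.e. of an element of `G`. So the span of `G` is closed under brackets,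
is a Lie subalgebra containing `iA`, and therefore contains `Lie⟨A⟩`.
-/

open Matrix

attribute [local instance 100] LieRing.ofAssociativeRing

noncomputable def pauli : Fin 4 → Matrix (Fin 2) (Fin 2) ℂ :=
  ![1, !![0, 1; 1, 0], !![0, -Complex.I; Complex.I, 0], !![1, 0; 0, -1]]

noncomputable def pauliString {n : ℕ} (s : Fin n → Fin 4) :
    Matrix (Fin n → Fin 2) (Fin n → Fin 2) ℂ :=
  Matrix.of fun v w => ∏ j, pauli (s j) (v j) (w j)

def PauliStrings (n : ℕ) : Set (Matrix (Fin n → Fin 2) (Fin n → Fin 2) ℂ) :=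
  Set.range (pauliString (n := n))

namespace LieSubalgebra

open Submodule

variable {R L : Type*} [CommRing R] [LieRing L] [LieAlgebra R L]

theorem coe_lieSpan_eq_span_of_forall_lie_mem_span {s : Set L}
    (hs : ∀ᵉ (x ∈ s) (y ∈ s), ⁅x, y⁆ ∈ span R s) :
    (lieSpan R L s : Submodule R L) = span R s := by
  suffices ∀ {x y}, x ∈ span R s → y ∈ span R s → ⁅x, y⁆ ∈ span R s by
    refine le_antisymm ?_ submodule_span_le_lieSpan
    change _ ≤ ({ span R s with lie_mem' := this } : LieSubalgebra R L)
    rw [lieSpan_le]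
    exact subset_span
  intro x y hx hy
  induction hx, hy using span_induction₂ with
  | mem_mem x y hx hy => exact hs x hx y hy
  | zero_left y hy => simp
  | zero_right x hx => simp
  | add_left x y z _ _ _ hx hy => simpa using add_mem hx hy
  | add_right x y z _ _ _ hx hy => simpa using add_mem hx hy
  | smul_left r x y _ _ h => simpa using smul_mem _ r h
  | smul_right r x y _ _ h => simpa using smul_mem _ r h

theorem coe_lieSpan_eq_span_lieSpan_inter {K : Type*} [Field K] [LieAlgebra K L] {B s : Set L}
    (hB : ∀ᵉ (x ∈ B) (y ∈ B), ∃ r : K, ∃ b ∈ B, ⁅x, y⁆ = r • b) (hs : s ⊆ B) :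
    (lieSpan K L s : Submodule K L) = span K {x | x ∈ lieSpan K L s ∧ x ∈ B} := by
  set G := {x | x ∈ lieSpan K L s ∧ x ∈ B}
  have hG : ∀ᵉ (x ∈ G) (y ∈ G), ⁅x, y⁆ ∈ span K G := by
    rintro x ⟨hxs, hxB⟩ y ⟨hys, hyB⟩
    obtain ⟨r, b, hb, hxy⟩ := hB x hxB y hyB
    rcases eq_or_ne r 0 with rfl | hr
    · simp [hxy]
    have hbs : b ∈ lieSpan K L s := by
      simpa [hxy, smul_smul, hr] using smul_mem _ r⁻¹ (lie_mem _ hxs hys)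
    exact hxy ▸ smul_mem _ r (subset_span ⟨hbs, hb⟩)
  refine le_antisymm ?_ (span_le.2 fun x hx => hx.1)
  calc (lieSpan K L s : Submodule K L)
      ≤ lieSpan K L G := lieSpan_mono fun x hx => ⟨subset_lieSpan hx, hs hx⟩
    _ = span K G := coe_lieSpan_eq_span_of_forall_lie_mem_span hG

end LieSubalgebra

def pauliMulIndex : Fin 4 → Fin 4 → Fin 4 :=
  ![![0, 1, 2, 3], ![1, 0, 3, 2], ![2, 3, 0, 1], ![3, 2, 1, 0]]

noncomputable def pauliMulPhase : Fin 4 → Fin 4 → ℂ :=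
  ![![1, 1, 1, 1], ![1, 1, Complex.I, -Complex.I], ![1, -Complex.I, 1, Complex.I],
    ![1, Complex.I, -Complex.I, 1]]

theorem pauli_mul (a b : Fin 4) :
    pauli a * pauli b = pauliMulPhase a b • pauli (pauliMulIndex a b) := by
  fin_cases a <;> fin_cases b <;>
    · ext i j
      fin_cases i <;> fin_cases j <;>
        simp [pauli, pauliMulPhase, pauliMulIndex, Matrix.mul_apply, Fin.sum_univ_two]

theorem pauliMulIndex_comm : ∀ a b : Fin 4, pauliMulIndex a b = pauliMulIndex b a := by
  decide

theorem pauliMulPhase_swap (a b : Fin 4) :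
    pauliMulPhase b a = starRingEnd ℂ (pauliMulPhase a b) := by
  fin_cases a <;> fin_cases b <;> simp [pauliMulPhase]

theorem pauliString_mul {n : ℕ} (s t : Fin n → Fin 4) :
    pauliString s * pauliString t =
      (∏ j, pauliMulPhase (s j) (t j)) • pauliString (fun j => pauliMulIndex (s j) (t j)) := by
  ext v w
  have hfactor (j : Fin n) : ∑ x : Fin 2, pauli (s j) (v j) x * pauli (t j) x (w j) =
      pauliMulPhase (s j) (t j) * pauli (pauliMulIndex (s j) (t j)) (v j) (w j) := by
    simpa [Matrix.mul_apply] using congrFun₂ (pauli_mul (s j) (t j)) (v j) (w j)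
  calc (pauliString s * pauliString t) v w
      = ∑ u : Fin n → Fin 2, ∏ j, pauli (s j) (v j) (u j) * pauli (t j) (u j) (w j) := by
        simp [pauliString, Matrix.mul_apply, Finset.prod_mul_distrib]
    _ = ∏ j, ∑ x : Fin 2, pauli (s j) (v j) x * pauli (t j) x (w j) := by
        rw [Fintype.prod_sum]
    _ = _ := by
        simp [hfactor, pauliString, Finset.prod_mul_distrib]

theorem exists_lie_I_smul_pauliString_eq {n : ℕ} (s t : Fin n → Fin 4) :
    ∃ (r : ℝ) (u : Fin n → Fin 4),
      ⁅Complex.I • pauliString s, Complex.I • pauliString t⁆ = r • (Complex.I • pauliString u) := by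
  set c : ℂ := ∏ j, pauliMulPhase (s j) (t j)
  set u := fun j => pauliMulIndex (s j) (t j)
  have hts : pauliString t * pauliString s = starRingEnd ℂ c • pauliString u := by
    simp only [pauliString_mul, c, u, map_prod, pauliMulPhase_swap (s _) (t _),
      pauliMulIndex_comm (t _) (s _)]
  refine ⟨-2 * c.im, u, ?_⟩
  rw [Ring.lie_def, smul_mul_smul_comm, smul_mul_smul_comm, pauliString_mul, hts, smul_smul,
    smul_smul, ← sub_smul, ← Complex.coe_smul, smul_smul]
  congr 1
  apply Complex.ext <;> simp <;> ring

/-- For any subset `A` of the Pauli strings, the Lie algebra generated by `iA` has a basis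
of Pauli strings times `i`: it equals the real span of the elements of the form `i·p`
(`p` a Pauli string) that it contains. -/
theorem lieSpan_pauli_spanned_by_pauli (n : ℕ)
    (A : Set (Matrix (Fin n → Fin 2) (Fin n → Fin 2) ℂ)) (hA : A ⊆ PauliStrings n) :
    (LieSubalgebra.lieSpan ℝ (Matrix (Fin n → Fin 2) (Fin n → Fin 2) ℂ)
        ((fun p => Complex.I • p) '' A)).toSubmodule =
      Submodule.span ℝ
        {x | x ∈ LieSubalgebra.lieSpan ℝ (Matrix (Fin n → Fin 2) (Fin n → Fin 2) ℂ)
              ((fun p => Complex.I • p) '' A) ∧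
            ∃ p ∈ PauliStrings n, x = Complex.I • p} := by
  refine LieSubalgebra.coe_lieSpan_eq_span_lieSpan_inter ?_ ?_
  · rintro _ ⟨_, ⟨s, rfl⟩, rfl⟩ _ ⟨_, ⟨t, rfl⟩, rfl⟩
    obtain ⟨r, u, h⟩ := exists_lie_I_smul_pauliString_eq s t
    exact ⟨r, _, ⟨_, ⟨u, rfl⟩, rfl⟩, h⟩
  · rintro _ ⟨p, hp, rfl⟩
    exact ⟨p, hA hp, rfl⟩
end

section
/- For any symmetric Pauli string Q ∈ P_n (Qᵀ = Q), there exists a unitary 2ⁿ×2ⁿ matrix U such that U Q Uᵀ = I^{⊗n}. For any antisymmetric Pauli string Q (Qᵀ = −Q), there exists a unitary U such that U Q Uᵀ = Y⊗I^{⊗(n−1)}. -/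
open Matrix

/-!
Every Pauli string `Q` is a Hermitian involution, and two Pauli strings commute up to a sign `ε`.
Take `R = 1` if `Q` is symmetric and `R = Y ⊗ I ⊗ ⋯ ⊗ I` if it is antisymmetric. Then `S = R Q`
satisfies `S² = ε` and `Sᴴ = Sᵀ = ε S`, and a suitable `U = α + β S` (a phase times
`exp (i π/4 S)` when `ε = 1`, the rotation `exp (π/4 S)` when `ε = -1`) is unitary with
`U Q Uᵀ = R`.
-/

open Finset

section PiKronecker

variable {ι κ R : Type*} [Fintype ι] [CommSemiring R]

def piKronecker (A : ι → Matrix κ κ R) : Matrix (ι → κ) (ι → κ) R :=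
  Matrix.of fun v w => ∏ j, A j (v j) (w j)

theorem piKronecker_mul [Fintype κ] [DecidableEq ι] (A B : ι → Matrix κ κ R) :
    piKronecker A * piKronecker B = piKronecker (A * B) := by
  ext v w
  simp only [piKronecker, mul_apply, of_apply, Pi.mul_apply, prod_univ_sum,
    Fintype.piFinset_univ, prod_mul_distrib]

theorem piKronecker_one [DecidableEq κ] : piKronecker (1 : ι → Matrix κ κ R) = 1 := by
  ext v w
  simp [piKronecker, one_apply, Fintype.prod_boole, funext_iff]

theorem piKronecker_smul (c : ι → R) (A : ι → Matrix κ κ R) :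
    piKronecker (fun j => c j • A j) = (∏ j, c j) • piKronecker A := by
  ext v w
  simp [piKronecker, prod_mul_distrib]

theorem piKronecker_transpose (A : ι → Matrix κ κ R) :
    (piKronecker A)ᵀ = piKronecker fun j => (A j)ᵀ :=
  rfl

theorem piKronecker_conjTranspose [StarRing R] (A : ι → Matrix κ κ R) :
    (piKronecker A)ᴴ = piKronecker fun j => (A j)ᴴ := by
  ext v w
  simp [piKronecker, star_prod]

end PiKronecker

theorem pauli_mul_self (k : Fin 4) : pauli k * pauli k = 1 := by
  fin_cases k <;> ext i j <;> fin_cases i <;> fin_cases j <;> simp [pauli]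

theorem pauli_conjTranspose (k : Fin 4) : (pauli k)ᴴ = pauli k := by
  fin_cases k <;> ext i j <;> fin_cases i <;> fin_cases j <;> simp [pauli]

theorem pauli_transpose (k : Fin 4) : (pauli k)ᵀ = (if k = 2 then -1 else 1 : ℂ) • pauli k := by
  fin_cases k <;> ext i j <;> fin_cases i <;> fin_cases j <;> simp [pauli]

theorem pauli_mul_comm_up_to_sign (k l : Fin 4) :
    ∃ ε : ℂ, ε * ε = 1 ∧ pauli k * pauli l = ε • (pauli l * pauli k) := by
  have : pauli k * pauli l = pauli l * pauli k ∨ pauli k * pauli l = -(pauli l * pauli k) := by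
    fin_cases k <;> fin_cases l <;> simp [pauli, ← Matrix.ext_iff, Fin.forall_fin_two]
  rcases this with h | h
  exacts [⟨1, one_mul 1, by rw [h, one_smul]⟩, ⟨-1, by norm_num, by rw [h, neg_one_smul]⟩]

section PauliString

variable {n : ℕ}

theorem pauliString_eq_piKronecker (s : Fin n → Fin 4) :
    pauliString s = piKronecker fun j => pauli (s j) :=
  rfl

theorem pauliString_mul_self (s : Fin n → Fin 4) : pauliString s * pauliString s = 1 := by
  rw [pauliString_eq_piKronecker, piKronecker_mul, ← piKronecker_one]
  exact congrArg piKronecker (funext fun j => pauli_mul_self (s j))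

theorem pauliString_conjTranspose (s : Fin n → Fin 4) : (pauliString s)ᴴ = pauliString s := by
  simp only [pauliString_eq_piKronecker, piKronecker_conjTranspose, pauli_conjTranspose]

theorem pauliString_transpose (s : Fin n → Fin 4) :
    (pauliString s)ᵀ = (∏ j, if s j = 2 then -1 else 1 : ℂ) • pauliString s := by
  simp only [pauliString_eq_piKronecker, piKronecker_transpose, pauli_transpose, piKronecker_smul]

theorem pauliString_mul_comm_up_to_sign (s t : Fin n → Fin 4) :
    ∃ ε : ℂ, ε * ε = 1 ∧ pauliString s * pauliString t = ε • (pauliString t * pauliString s) := by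
  choose ε hε hst using fun j => pauli_mul_comm_up_to_sign (s j) (t j)
  refine ⟨∏ j, ε j, by rw [← prod_mul_distrib]; simp [hε], ?_⟩
  simp only [pauliString_eq_piKronecker, piKronecker_mul, ← piKronecker_smul]
  exact congrArg piKronecker (funext hst)

end PauliString

theorem smul_one_add_smul_mul_smul_one_add_smul {K A : Type*} [CommRing K] [Ring A] [Algebra K A]
    {S : A} {ε : K} (hS : S * S = ε • 1) (a b c d : K) :
    (a • 1 + b • S) * (c • 1 + d • S) = (a * c + ε * (b * d)) • 1 + (a * d + b * c) • S := by
  simp only [add_mul, mul_add, smul_mul_smul_comm, one_mul, mul_one, hS, smul_smul]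
  module

/-- The coefficients of `U = α + β S` in `exists_unitary_mul_mul_transpose_eq`: the first two
equations give `U Q Uᵀ = R`, the last two make `U` unitary. -/
theorem exists_unitary_congr_coeffs {ε : ℂ} (hε : ε * ε = 1) :
    ∃ α β : ℂ, α * α + ε * (β * β) = 0 ∧ 2 * α * β = 1 ∧
      α * star α + β * star β = 1 ∧ ε * α * star β + star α * β = 0 := by
  rcases mul_self_eq_one_iff.mp hε with rfl | rfl
  · refine ⟨(1 - Complex.I) / 2, (1 + Complex.I) / 2, ?_, ?_, ?_, ?_⟩ <;>
      simp [Complex.ext_iff] <;> norm_num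
  · obtain ⟨r, hr⟩ : ∃ r : ℝ, r * r = 1 / 2 :=
      ⟨Real.sqrt (1 / 2), Real.mul_self_sqrt (by norm_num)⟩
    have hrC : (r : ℂ) * r = 1 / 2 := by rw [← Complex.ofReal_mul, hr]; norm_num
    have hstar : star (r : ℂ) = r := Complex.conj_ofReal r
    refine ⟨r, r, by ring, by linear_combination 2 * hrC, ?_, ?_⟩ <;> rw [hstar]
    exacts [by linear_combination 2 * hrC, by ring]

theorem exists_unitary_mul_mul_transpose_eq {m : Type*} [Fintype m] [DecidableEq m]
    {Q R : Matrix m m ℂ} {ε : ℂ} (hε : ε * ε = 1) (hQ : Q * Q = 1) (hR : R * R = 1)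
    (hQh : Qᴴ = Q) (hRh : Rᴴ = R) (hQR : Q * R = ε • (R * Q)) (hT : (R * Q)ᵀ = ε • (R * Q)) :
    ∃ U : Matrix m m ℂ, U * Uᴴ = 1 ∧ Uᴴ * U = 1 ∧ U * Q * Uᵀ = R := by
  obtain ⟨α, β, hQcoef, hRcoef, hnorm, hcross⟩ := exists_unitary_congr_coeffs hε
  set S := R * Q
  have hS : S * S = ε • 1 := by
    calc R * Q * (R * Q) = R * (Q * R) * Q := by noncomm_ring
      _ = ε • 1 := by rw [hQR, mul_smul_comm, smul_mul_assoc, ← mul_assoc, hR, one_mul, hQ]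
  have hSh : Sᴴ = ε • S := by rw [conjTranspose_mul, hQh, hRh, hQR]
  have hSQ : S * Q = R := by rw [mul_assoc, hQ, mul_one]
  have hQS : Q * S = ε • R := by rw [← mul_assoc, hQR, smul_mul_assoc, hSQ]
  have hRS : R * S = Q := by rw [← mul_assoc, hR, one_mul]
  have hUh : (α • 1 + β • S)ᴴ = star α • 1 + (ε * star β) • S := by
    rw [conjTranspose_add, conjTranspose_smul, conjTranspose_smul, conjTranspose_one, hSh,
      smul_smul, mul_comm]
  have hUT : (α • 1 + β • S)ᵀ = α • 1 + (ε * β) • S := by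
    rw [transpose_add, transpose_smul, transpose_smul, transpose_one, hT, smul_smul, mul_comm]
  refine ⟨α • 1 + β • S, ?_, ?_, ?_⟩
  · rw [hUh, smul_one_add_smul_mul_smul_one_add_smul hS]
    rw [show α * star α + ε * (β * (ε * star β)) = 1 by linear_combination hnorm + β * star β * hε,
      show α * (ε * star β) + β * star α = 0 by linear_combination hcross, one_smul, zero_smul,
      add_zero]
  · rw [hUh, smul_one_add_smul_mul_smul_one_add_smul hS]
    rw [show star α * α + ε * (ε * star β * β) = 1 by linear_combination hnorm + β * star β * hε,
      show star α * β + ε * star β * α = 0 by linear_combination hcross, one_smul, zero_smul,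
      add_zero]
  · calc (α • 1 + β • S) * Q * (α • 1 + β • S)ᵀ = (α • Q + β • R) * (α • 1 + (ε * β) • S) := by
          rw [add_mul, smul_mul_assoc, smul_mul_assoc, one_mul, hSQ, hUT]
      _ = (α * α + ε * (β * β)) • Q + (2 * α * β) • R := by
          simp only [add_mul, mul_add, smul_mul_smul_comm, mul_one, hQS, hRS, smul_smul]
          linear_combination (norm := module) (α * β) • hε • R
      _ = R := by rw [hQcoef, hRcoef, zero_smul, zero_add, one_smul]

/-- Any symmetric Pauli string can be brought to the identity, and any antisymmetric
Pauli string to `Y⊗I^{⊗(n−1)}`, by a transformation `Q ↦ U Q Uᵀ` with `U` unitary. -/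
theorem pauliString_congr_normal_form (n : ℕ)
    (Q : Matrix (Fin n → Fin 2) (Fin n → Fin 2) ℂ) (hQ : Q ∈ PauliStrings n) :
    (Qᵀ = Q → ∃ U : Matrix (Fin n → Fin 2) (Fin n → Fin 2) ℂ,
        U * Uᴴ = 1 ∧ Uᴴ * U = 1 ∧ U * Q * Uᵀ = 1) ∧
    (Qᵀ = -Q → ∃ U : Matrix (Fin n → Fin 2) (Fin n → Fin 2) ℂ,
        U * Uᴴ = 1 ∧ Uᴴ * U = 1 ∧
          U * Q * Uᵀ = pauliString (fun j => if (j : ℕ) = 0 then 2 else 0)) := by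
  obtain ⟨s, rfl⟩ := hQ
  refine ⟨fun hsymm => ?_, fun hanti => ?_⟩
  · exact exists_unitary_mul_mul_transpose_eq (one_mul 1) (pauliString_mul_self s) (one_mul 1)
      (pauliString_conjTranspose s) conjTranspose_one (by simp) (by simpa using hsymm)
  cases n with
  -- the only Pauli string of length `0` is the `1 × 1` identity
  | zero => exact absurd (congrFun₂ hanti default default) (by norm_num [pauliString])
  | succ n =>
    set R := pauliString fun j : Fin (n + 1) => if (j : ℕ) = 0 then 2 else 0
    have hRT : Rᵀ = -R := by simp [R, pauliString_transpose]
    obtain ⟨ε, hε, hQR⟩ := pauliString_mul_comm_up_to_sign s _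
    refine exists_unitary_mul_mul_transpose_eq hε (pauliString_mul_self s) (pauliString_mul_self _)
      (pauliString_conjTranspose s) (pauliString_conjTranspose _) hQR ?_
    rw [transpose_mul, hanti, hRT, neg_mul_neg, hQR]
end

section
/- The centralizer of X₁ = X⊗I^{⊗(n−1)} in su(2ⁿ), modulo the span of iX₁, is isomorphic as a real Lie algebra to su(2^{n−1}) ⊕ su(2^{n−1}). An explicit isomorphism sends (a,b) to P₊⊗a + P₋⊗b, where P± = (I±X)/2. -/
set_option linter.unusedSectionVars false

open Matrix
open scoped Kronecker

noncomputable def sigmaX : Matrix (Fin 2) (Fin 2) ℂ := !![0, 1; 1, 0]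
noncomputable def Pplus : Matrix (Fin 2) (Fin 2) ℂ := (2⁻¹ : ℂ) • (1 + sigmaX)
noncomputable def Pminus : Matrix (Fin 2) (Fin 2) ℂ := (2⁻¹ : ℂ) • (1 - sigmaX)

/-- `X₁ = X ⊗ I^{⊗(n−1)}`, realized on the index type `Fin 2 × Fin (2^(n-1))`. -/
noncomputable def X1 (n : ℕ) : Matrix (Fin 2 × Fin (2 ^ (n - 1))) (Fin 2 × Fin (2 ^ (n - 1))) ℂ :=
  sigmaX ⊗ₖ (1 : Matrix (Fin (2 ^ (n - 1))) (Fin (2 ^ (n - 1))) ℂ)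


lemma Pplus_eq : Pplus = !![2⁻¹, 2⁻¹; 2⁻¹, 2⁻¹] := by
  ext i j; fin_cases i <;> fin_cases j <;> simp [Pplus, sigmaX, Matrix.one_apply]

lemma Pminus_eq : Pminus = !![2⁻¹, -2⁻¹; -2⁻¹, 2⁻¹] := by
  ext i j; fin_cases i <;> fin_cases j <;> simp [Pminus, sigmaX, Matrix.one_apply]

lemma PP : Pplus * Pplus = Pplus := by
  rw [Pplus_eq]; norm_num [Matrix.mul_fin_two]

lemma MM : Pminus * Pminus = Pminus := by
  rw [Pminus_eq]; norm_num [Matrix.mul_fin_two]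

lemma PM : Pplus * Pminus = 0 := by
  rw [Pplus_eq, Pminus_eq]; norm_num [Matrix.mul_fin_two]
  ext i j; fin_cases i <;> fin_cases j <;> norm_num

lemma MP : Pminus * Pplus = 0 := by
  rw [Pplus_eq, Pminus_eq]; norm_num [Matrix.mul_fin_two]
  ext i j; fin_cases i <;> fin_cases j <;> norm_num

lemma XP : sigmaX * Pplus = Pplus := by
  rw [Pplus_eq, sigmaX]; norm_num [Matrix.mul_fin_two]

lemma PX : Pplus * sigmaX = Pplus := by
  rw [Pplus_eq, sigmaX]; norm_num [Matrix.mul_fin_two]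

lemma XM : sigmaX * Pminus = -Pminus := by
  rw [Pminus_eq, sigmaX]; norm_num [Matrix.mul_fin_two]

lemma MX : Pminus * sigmaX = -Pminus := by
  rw [Pminus_eq, sigmaX]; norm_num [Matrix.mul_fin_two]

lemma PplusH : Pplusᴴ = Pplus := by
  rw [Pplus_eq]; ext i j; fin_cases i <;> fin_cases j <;> simp

lemma PminusH : Pminusᴴ = Pminus := by
  rw [Pminus_eq]; ext i j; fin_cases i <;> fin_cases j <;> simp

lemma sigmaXH : sigmaXᴴ = sigmaX := by
  rw [sigmaX]; ext i j; fin_cases i <;> fin_cases j <;> simp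

variable {ι : Type*} [Fintype ι] [DecidableEq ι]

lemma kron_conjT (A : Matrix (Fin 2) (Fin 2) ℂ) (B : Matrix ι ι ℂ) :
    (A ⊗ₖ B)ᴴ = Aᴴ ⊗ₖ Bᴴ := by
  ext ⟨i, k⟩ ⟨j, l⟩
  simp [Matrix.conjTranspose_apply, Matrix.kroneckerMap_apply, mul_comm]

lemma kron_sub (A : Matrix (Fin 2) (Fin 2) ℂ) (B C : Matrix ι ι ℂ) :
    A ⊗ₖ (B - C) = A ⊗ₖ B - A ⊗ₖ C := by
  ext ⟨i, k⟩ ⟨j, l⟩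
  simp [Matrix.kroneckerMap_apply, Matrix.sub_apply, mul_sub]

lemma part1 (a b a' b' : Matrix ι ι ℂ) :
    Pplus ⊗ₖ ⁅a, a'⁆ + Pminus ⊗ₖ ⁅b, b'⁆ =
      ⁅Pplus ⊗ₖ a + Pminus ⊗ₖ b, Pplus ⊗ₖ a' + Pminus ⊗ₖ b'⁆ := by
  simp only [Ring.lie_def, add_mul, mul_add, ← Matrix.mul_kronecker_mul, PP, MM, PM, MP,
    Matrix.zero_kronecker, kron_sub]
  abel

lemma part2 [Nonempty ι] (a b : Matrix ι ι ℂ) (t : ℝ)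
    (ha : aᴴ = -a ∧ a.trace = 0) (hb : bᴴ = -b ∧ b.trace = 0)
    (h : Pplus ⊗ₖ a + Pminus ⊗ₖ b + t • (Complex.I • (sigmaX ⊗ₖ (1 : Matrix ι ι ℂ))) = 0) :
    a = 0 ∧ b = 0 ∧ t = 0 := by
  have key : ∀ k l : ι, a k l = -(if k = l then (t : ℂ) * Complex.I else 0) ∧
      b k l = (if k = l then (t : ℂ) * Complex.I else 0) := by
    intro k l
    have h1 := congrFun (congrFun h ((0 : Fin 2), k)) ((0 : Fin 2), l)
    have h2 := congrFun (congrFun h ((0 : Fin 2), k)) ((1 : Fin 2), l)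
    simp [Matrix.add_apply, Matrix.smul_apply, Matrix.kroneckerMap_apply, Pplus_eq, Pminus_eq,
      sigmaX, Matrix.one_apply] at h1 h2
    constructor
    · split_ifs at h2 ⊢ <;> linear_combination h1 + h2
    · split_ifs at h2 ⊢ <;> linear_combination h1 - h2
  have htr : a.trace = -((Fintype.card ι : ℂ) * ((t : ℂ) * Complex.I)) := by
    rw [Matrix.trace]
    rw [Finset.sum_congr rfl (fun k _ => show a.diag k = _ from (key k k).1)]
    simp
  rw [ha.2] at htr
  have hcard : (Fintype.card ι : ℂ) ≠ 0 := by
    simp [Fintype.card_ne_zero]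
  have ht : (t : ℂ) = 0 := by
    have h0 : (Fintype.card ι : ℂ) * ((t : ℂ) * Complex.I) = 0 := by linear_combination htr
    rcases mul_eq_zero.mp h0 with h' | h'
    · exact absurd h' hcard
    · rcases mul_eq_zero.mp h' with h'' | h''
      · exact h''
      · exact absurd h'' Complex.I_ne_zero
  have ht' : t = 0 := by exact_mod_cast ht
  refine ⟨?_, ?_, ht'⟩
  · ext k l; rw [(key k l).1]; simp [ht]
  · ext k l; rw [(key k l).2]; simp [ht]

lemma kron_neg (A : Matrix (Fin 2) (Fin 2) ℂ) (B : Matrix ι ι ℂ) :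
    (-A) ⊗ₖ B = -(A ⊗ₖ B) := by
  ext ⟨i, k⟩ ⟨j, l⟩
  simp [Matrix.kroneckerMap_apply]

lemma trace_sigmaX : sigmaX.trace = 0 := by
  simp [sigmaX, Matrix.trace_fin_two]

lemma trace_Pplus : Pplus.trace = 1 := by
  rw [Pplus_eq]; norm_num [Matrix.trace_fin_two]

lemma trace_Pminus : Pminus.trace = 1 := by
  rw [Pminus_eq]; norm_num [Matrix.trace_fin_two]

lemma part3_rev (a b : Matrix ι ι ℂ) (t : ℝ)
    (ha : aᴴ = -a ∧ a.trace = 0) (hb : bᴴ = -b ∧ b.trace = 0) :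
    letI m := Pplus ⊗ₖ a + Pminus ⊗ₖ b + t • (Complex.I • (sigmaX ⊗ₖ (1 : Matrix ι ι ℂ)))
    (mᴴ = -m ∧ m.trace = 0) ∧ (sigmaX ⊗ₖ (1 : Matrix ι ι ℂ)) * m = m * (sigmaX ⊗ₖ 1) := by
  refine ⟨⟨?_, ?_⟩, ?_⟩
  · simp only [Matrix.conjTranspose_add, Matrix.conjTranspose_smul, kron_conjT, PplusH, PminusH,
      sigmaXH, ha.1, hb.1, Matrix.conjTranspose_one, kron_neg, Matrix.kronecker_zero,
      star_trivial, Complex.star_def, Complex.conj_I]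
    rw [show Pplus ⊗ₖ (-a) = -(Pplus ⊗ₖ a) by ext ⟨i,k⟩ ⟨j,l⟩; simp [Matrix.kroneckerMap_apply],
      show Pminus ⊗ₖ (-b) = -(Pminus ⊗ₖ b) by ext ⟨i,k⟩ ⟨j,l⟩; simp [Matrix.kroneckerMap_apply]]
    simp only [smul_neg, neg_smul]
    abel
  · simp [Matrix.trace_add, Matrix.trace_smul, Matrix.trace_kronecker, ha.2, hb.2, trace_sigmaX]
  · simp only [mul_add, add_mul, ← Matrix.mul_kronecker_mul, XP, PX, XM, MX, one_mul, mul_one,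
      kron_neg, mul_smul_comm, smul_mul_assoc]

lemma part3_fwd [Nonempty ι] (m : Matrix (Fin 2 × ι) (Fin 2 × ι) ℂ)
    (hH : mᴴ = -m) (htr : m.trace = 0)
    (hc : (sigmaX ⊗ₖ (1 : Matrix ι ι ℂ)) * m = m * (sigmaX ⊗ₖ 1)) :
    ∃ (a b : Matrix ι ι ℂ) (t : ℝ),
      (aᴴ = -a ∧ a.trace = 0) ∧ (bᴴ = -b ∧ b.trace = 0) ∧
      m = Pplus ⊗ₖ a + Pminus ⊗ₖ b + t • (Complex.I • (sigmaX ⊗ₖ (1 : Matrix ι ι ℂ))) := by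
  have hc1 : ∀ k l : ι, m (1, k) (0, l) = m (0, k) (1, l) := by
    intro k l
    have h1 := congrFun (congrFun hc ((0 : Fin 2), k)) ((0 : Fin 2), l)
    simpa [Matrix.mul_apply, Fintype.sum_prod_type, Fin.sum_univ_two, Matrix.kroneckerMap_apply,
      sigmaX, Matrix.one_apply, ite_mul, mul_ite] using h1
  have hc2 : ∀ k l : ι, m (1, k) (1, l) = m (0, k) (0, l) := by
    intro k l
    have h1 := congrFun (congrFun hc ((0 : Fin 2), k)) ((1 : Fin 2), l)
    simpa [Matrix.mul_apply, Fintype.sum_prod_type, Fin.sum_univ_two, Matrix.kroneckerMap_apply,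
      sigmaX, Matrix.one_apply, ite_mul, mul_ite] using h1
  have hstar : ∀ (i j : Fin 2 × ι), star (m j i) = -(m i j) := by
    intro i j
    simpa [Matrix.conjTranspose_apply] using congrFun (congrFun hH i) j
  set A : Matrix ι ι ℂ := Matrix.of fun k l => m (0, k) (0, l) with hAdef
  set B : Matrix ι ι ℂ := Matrix.of fun k l => m (0, k) (1, l) with hBdef
  have hA : Aᴴ = -A := by
    ext k l
    simpa [hAdef, Matrix.conjTranspose_apply] using hstar (0, k) (0, l)
  have hB : Bᴴ = -B := by
    ext k l
    have := hstar (1, k) (0, l)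
    rw [hc1 k l] at this
    simpa [hBdef, Matrix.conjTranspose_apply, hc1] using this
  have hAtr : A.trace = 0 := by
    have h2 : m.trace = 2 * A.trace := by
      simp only [Matrix.trace, Matrix.diag, Fintype.sum_prod_type_right, Fin.sum_univ_two]
      rw [Finset.sum_add_distrib]
      simp only [hAdef, hc2, Matrix.of_apply]
      ring
    rw [htr] at h2
    linear_combination -h2 / 2
  have hBre : (B.trace).re = 0 := by
    have h1 : star B.trace = -B.trace := by
      simp only [Matrix.trace, Matrix.diag, star_sum]
      rw [← Finset.sum_neg_distrib]
      refine Finset.sum_congr rfl fun k _ => ?_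
      have := hstar (1, k) (0, k)
      rw [hc1 k k] at this
      simpa [hBdef] using this
    have h2 := congrArg Complex.re h1
    simp at h2
    linarith
  have hNpos : (0:ℝ) < (Fintype.card ι : ℝ) := by exact_mod_cast Fintype.card_pos
  set t : ℝ := (B.trace).im / (Fintype.card ι : ℝ) with htdef
  have hBtr : B.trace = (t : ℂ) * (Fintype.card ι : ℂ) * Complex.I := by
    apply Complex.ext <;>
      simp [htdef, hBre, Complex.mul_re, Complex.mul_im] <;> field_simp
  refine ⟨A + B - ((t : ℂ) * Complex.I) • 1, A - B + ((t : ℂ) * Complex.I) • 1, t,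
    ⟨?_, ?_⟩, ⟨?_, ?_⟩, ?_⟩
  · simp only [Matrix.conjTranspose_sub, Matrix.conjTranspose_add, Matrix.conjTranspose_smul,
      hA, hB, Matrix.conjTranspose_one, Complex.star_def, _root_.map_mul, Complex.conj_I,
      Complex.conj_ofReal]
    module
  · rw [Matrix.trace_sub, Matrix.trace_add, Matrix.trace_smul, Matrix.trace_one, hAtr]
    simp only [smul_eq_mul]
    linear_combination hBtr
  · simp only [Matrix.conjTranspose_sub, Matrix.conjTranspose_add, Matrix.conjTranspose_smul,
      hA, hB, Matrix.conjTranspose_one, Complex.star_def, _root_.map_mul, Complex.conj_I,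
      Complex.conj_ofReal]
    module
  · rw [Matrix.trace_add, Matrix.trace_sub, Matrix.trace_smul, Matrix.trace_one, hAtr]
    simp only [smul_eq_mul]
    linear_combination -hBtr
  · ext ⟨p, k⟩ ⟨q, l⟩
    fin_cases p <;> fin_cases q <;>
      simp [Matrix.kroneckerMap_apply, Pplus_eq, Pminus_eq, sigmaX, Matrix.one_apply,
        Matrix.add_apply, Matrix.sub_apply, Matrix.smul_apply, hAdef, hBdef, hc1, hc2] <;>
      ring

/-- The centralizer of `X₁` in `su(2ⁿ)`, modulo the span of `iX₁`, is isomorphic to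
`su(2^{n−1}) ⊕ su(2^{n−1})` via `(a,b) ↦ P₊⊗a + P₋⊗b`: the map preserves brackets, every
element of the centralizer decomposes uniquely as `P₊⊗a + P₋⊗b + t·iX₁` with `a, b` in
`su(2^{n−1})` and `t ∈ ℝ`. -/
theorem centralizer_X1_mod_center_iso (n : ℕ) (hn : 1 ≤ n) :
    -- the map `(a,b) ↦ P₊⊗a + P₋⊗b` preserves Lie brackets
    (∀ a b a' b' : Matrix (Fin (2 ^ (n - 1))) (Fin (2 ^ (n - 1))) ℂ,
        Pplus ⊗ₖ ⁅a, a'⁆ + Pminus ⊗ₖ ⁅b, b'⁆ =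
          ⁅Pplus ⊗ₖ a + Pminus ⊗ₖ b, Pplus ⊗ₖ a' + Pminus ⊗ₖ b'⁆) ∧
    -- uniqueness of the decomposition (injectivity)
    (∀ (a b : Matrix (Fin (2 ^ (n - 1))) (Fin (2 ^ (n - 1))) ℂ) (t : ℝ),
        (aᴴ = -a ∧ a.trace = 0) → (bᴴ = -b ∧ b.trace = 0) →
        Pplus ⊗ₖ a + Pminus ⊗ₖ b + t • (Complex.I • X1 n) = 0 →
        a = 0 ∧ b = 0 ∧ t = 0) ∧
    -- surjectivity onto the centralizer of `X₁` in `su(2ⁿ)`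
    (∀ m : Matrix (Fin 2 × Fin (2 ^ (n - 1))) (Fin 2 × Fin (2 ^ (n - 1))) ℂ,
        ((mᴴ = -m ∧ m.trace = 0) ∧ X1 n * m = m * X1 n) ↔
          ∃ (a b : Matrix (Fin (2 ^ (n - 1))) (Fin (2 ^ (n - 1))) ℂ) (t : ℝ),
            (aᴴ = -a ∧ a.trace = 0) ∧ (bᴴ = -b ∧ b.trace = 0) ∧
            m = Pplus ⊗ₖ a + Pminus ⊗ₖ b + t • (Complex.I • X1 n)) := by
  haveI : Nonempty (Fin (2 ^ (n - 1))) := ⟨⟨0, pow_pos (by norm_num) _⟩⟩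
  refine ⟨fun a b a' b' => part1 a b a' b', fun a b t ha hb h => part2 a b t ha hb h,
    fun m => ⟨?_, ?_⟩⟩
  · rintro ⟨⟨h1, h2⟩, h3⟩
    exact part3_fwd m h1 h2 h3
  · rintro ⟨a, b, t, ha, hb, rfl⟩
    exact ⟨(part3_rev a b t ha hb).1, (part3_rev a b t ha hb).2⟩
end

section
/- There exists a unitary 2ⁿ×2ⁿ matrix U with U X₁ U† = X^{⊗n}; consequently the centralizer of X^{⊗n} in su(2ⁿ), modulo the span of i·X^{⊗n}, is isomorphic to su(2^{n−1}) ⊕ su(2^{n−1}). -/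
open Matrix

/-!
The Pauli strings `X₁` and `X^{⊗n}` are the translation matrices `|v⟩ ↦ |v + a⟩` of `𝔽₂ⁿ` by
`a = e₀` and by the all-ones vector. The CNOT fan `v ↦ (v₀, v₁ + v₀, …, vₙ₋₁ + v₀)` is an
`𝔽₂`-linear automorphism sending the all-ones vector to `e₀`, so its permutation matrix `U`
conjugates `X₁` to `X^{⊗n}`.

For the centralizer, split off the first qubit, so that matrices become `2 × 2` block matrices
and `X₁` becomes `[[0, 1], [1, 0]]`; a block Hadamard turns this into `Z = diag(1, -1)`. The
elements of `su` commuting with `Z` are the `diag(A, B)` with `A, B` skew-Hermitian and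
`tr A + tr B = 0`, and removing the scalar part `(tr A / N) • Z` writes each of them uniquely as
`diag(a, b) + t • iZ` with `a, b ∈ su(N)`. Conjugation by a unitary and reindexing are
trace-preserving `⋆`-isomorphisms, so they carry this decomposition from `Z` to `X₁` and then,
by `U`, to `X^{⊗n}`.
-/

section Translation

variable {G R : Type*} [AddGroup G] [DecidableEq G] [Zero R] [One R]

def translationMatrix (a : G) : Matrix G G R :=
  of fun v w => if w = v + a then 1 else 0

theorem translationMatrix_submatrix {H : Type*} [AddGroup H] [DecidableEq H] (e : H ≃+ G)
    (a : G) :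
    (translationMatrix a : Matrix G G R).submatrix e e = translationMatrix (e.symm a) := by
  ext v w
  have h : e v + a = e (v + e.symm a) := by rw [map_add, e.apply_symm_apply]
  simp only [translationMatrix, submatrix_apply, of_apply, h, e.injective.eq_iff]

theorem submatrix_translationMatrix_eq_fromBlocks {ι : Type*} [DecidableEq ι] (e : ι ⊕ ι ≃ G)
    (d : G) (he₁ : ∀ x, e (.inl x) + d = e (.inr x)) (he₂ : ∀ x, e (.inr x) + d = e (.inl x)) :
    (translationMatrix d : Matrix G G R).submatrix e e = fromBlocks 0 1 1 0 := by
  ext (x | x) (y | y) <;> simp [translationMatrix, he₁, he₂, one_apply, eq_comm]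

end Translation

theorem pauli_eq_translationMatrix (a : Fin 2) :
    pauli (if a = 1 then 1 else 0) = translationMatrix a := by
  ext v w
  fin_cases a <;> fin_cases v <;> fin_cases w <;> simp [pauli, translationMatrix]

theorem pauliString_eq_translationMatrix {n : ℕ} (s : Fin n → Fin 4) (a : Fin n → Fin 2)
    (h : ∀ j, pauli (s j) = translationMatrix (a j)) :
    pauliString s = translationMatrix a := by
  ext v w
  simp only [pauliString, h, translationMatrix, of_apply]
  rw [Fintype.prod_boole]
  simp [funext_iff]

theorem pauliString_single_X_eq_translationMatrix (m : ℕ) :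
    pauliString (fun j : Fin (m + 1) => if (j : ℕ) = 0 then 1 else 0) =
      translationMatrix (Pi.single 0 1) := by
  refine pauliString_eq_translationMatrix _ _ fun j => ?_
  rw [← pauli_eq_translationMatrix]
  by_cases h : j = 0 <;> simp [h]

theorem pauliString_all_X_eq_translationMatrix (n : ℕ) :
    pauliString (fun _ : Fin n => (1 : Fin 4)) = translationMatrix 1 :=
  pauliString_eq_translationMatrix _ _ fun _ => pauli_eq_translationMatrix 1

theorem fin_two_add_self (a : Fin 2) : a + a = 0 := by
  decide +revert

/-- The basis permutation performed by CNOT gates with control qubit `0` and every other qubit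
as target. -/
def cnotFan (m : ℕ) : (Fin (m + 1) → Fin 2) ≃+ (Fin (m + 1) → Fin 2) where
  toFun v j := if j = 0 then v j else v j + v 0
  invFun v j := if j = 0 then v j else v j + v 0
  left_inv v := by
    funext j
    by_cases h : j = 0 <;> simp [h, add_assoc, fin_two_add_self]
  right_inv v := by
    funext j
    by_cases h : j = 0 <;> simp [h, add_assoc, fin_two_add_self]
  map_add' v w := by
    funext j
    by_cases h : j = 0 <;> simp [h, add_add_add_comm]

theorem cnotFan_symm_single (m : ℕ) : (cnotFan m).symm (Pi.single 0 1) = 1 := by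
  funext j
  by_cases h : j = 0 <;> simp [cnotFan, h]

section Permutation

variable {n R : Type*} [Fintype n] [DecidableEq n]

theorem permMatrix_mul_mul_conjTranspose [NonAssocSemiring R] [StarRing R] (σ : Equiv.Perm n)
    (A : Matrix n n R) : σ.permMatrix R * A * (σ.permMatrix R)ᴴ = A.submatrix σ σ := by
  rw [conjTranspose_permMatrix, PEquiv.toMatrix_toPEquiv_mul, PEquiv.mul_toMatrix_toPEquiv,
    submatrix_submatrix]
  rfl

theorem permMatrix_mem_unitary [CommRing R] [StarRing R] (σ : Equiv.Perm n) :
    σ.permMatrix R ∈ unitary (Matrix n n R) := by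
  rw [Unitary.mem_iff, star_eq_conjTranspose, conjTranspose_permMatrix, ← permMatrix_mul,
    ← permMatrix_mul, mul_inv_cancel, inv_mul_cancel, permMatrix_one]
  exact ⟨rfl, rfl⟩

end Permutation

theorem permMatrix_cnotFan_conj_pauliString_single_X (m : ℕ) :
    Equiv.Perm.permMatrix ℂ (cnotFan m).toEquiv *
        pauliString (fun j => if (j : ℕ) = 0 then 1 else 0) *
        (Equiv.Perm.permMatrix ℂ (cnotFan m).toEquiv)ᴴ =
      pauliString (fun _ : Fin (m + 1) => (1 : Fin 4)) := by
  rw [permMatrix_mul_mul_conjTranspose, pauliString_single_X_eq_translationMatrix,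
    pauliString_all_X_eq_translationMatrix, ← cnotFan_symm_single m]
  exact translationMatrix_submatrix (cnotFan m) _

def su (ι : Type*) [Fintype ι] : Set (Matrix ι ι ℂ) :=
  {A | Aᴴ = -A ∧ A.trace = 0}

/-- `Ψ (su ι × su ι) ⊕ ℝ • iP` is a direct-sum decomposition of the centralizer of `P` in
`su κ`. -/
structure IsSUCentralizerDecomposition {ι κ : Type*} [Fintype ι] [DecidableEq ι] [Fintype κ]
    [DecidableEq κ] (Ψ : Matrix ι ι ℂ × Matrix ι ι ℂ →ₐ[ℂ] Matrix κ κ ℂ) (P : Matrix κ κ ℂ) :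
    Prop where
  eq_zero_of_add_eq_zero (p : Matrix ι ι ℂ × Matrix ι ι ℂ) (t : ℝ) :
    p.1 ∈ su ι → p.2 ∈ su ι → Ψ p + t • (Complex.I • P) = 0 → p = 0 ∧ t = 0
  mem_centralizer_iff (M : Matrix κ κ ℂ) :
    (M ∈ su κ ∧ P * M = M * P) ↔
      ∃ (p : Matrix ι ι ℂ × Matrix ι ι ℂ) (t : ℝ),
        p.1 ∈ su ι ∧ p.2 ∈ su ι ∧ M = Ψ p + t • (Complex.I • P)

theorem trace_fromBlocks {R m n : Type*} [AddCommMonoid R] [Fintype m] [Fintype n]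
    (A : Matrix m m R) (B : Matrix m n R) (C : Matrix n m R) (D : Matrix n n R) :
    (fromBlocks A B C D).trace = A.trace + D.trace := by
  simp [trace, Fintype.sum_sum_type]

section Blocks

variable {R m n : Type*} [CommSemiring R] [Fintype m] [Fintype n] [DecidableEq m] [DecidableEq n]

def fromBlocksDiagonalAlgHom : Matrix m m R × Matrix n n R →ₐ[R] Matrix (m ⊕ n) (m ⊕ n) R where
  toFun p := fromBlocks p.1 0 0 p.2
  map_one' := fromBlocks_one
  map_mul' p q := by simp [fromBlocks_multiply]
  map_zero' := fromBlocks_zero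
  map_add' p q := by simp [fromBlocks_add]
  commutes' r := by simp [Algebra.algebraMap_eq_smul_one, ← fromBlocks_one, fromBlocks_smul]

theorem fromBlocksDiagonalAlgHom_apply (p : Matrix m m R × Matrix n n R) :
    fromBlocksDiagonalAlgHom p = fromBlocks p.1 0 0 p.2 :=
  rfl

end Blocks

section SignCentralizer

variable {ι : Type*}

theorem fromBlocks_mem_su_iff [Fintype ι] (A B : Matrix ι ι ℂ) :
    fromBlocks A 0 0 B ∈ su (ι ⊕ ι) ↔ Aᴴ = -A ∧ Bᴴ = -B ∧ A.trace + B.trace = 0 := by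
  simp [su, fromBlocks_conjTranspose, fromBlocks_neg, fromBlocks_inj, trace_fromBlocks, and_assoc]

theorem trace_eq_im_mul_I_of_conjTranspose_eq_neg [Fintype ι] {A : Matrix ι ι ℂ}
    (hA : Aᴴ = -A) : A.trace = (A.trace.im : ℂ) * Complex.I := by
  have h := congrArg Complex.re (trace_conjTranspose A)
  rw [hA, trace_neg] at h
  apply Complex.ext
  · simp at h ⊢
    linarith
  · simp

instance {m n α : Type*} [AddGroup α] [IsAddTorsionFree α] : IsAddTorsionFree (Matrix m n α) :=
  inferInstanceAs (IsAddTorsionFree (m → n → α))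

variable [DecidableEq ι]

theorem conjTranspose_ofReal_mul_I_smul_one (t : ℝ) :
    (((t : ℂ) * Complex.I) • (1 : Matrix ι ι ℂ))ᴴ = -(((t : ℂ) * Complex.I) • 1) := by
  rw [conjTranspose_smul, conjTranspose_one, ← neg_smul]
  simp

theorem smul_I_smul_fromBlocks_one_neg_one (t : ℝ) :
    t • (Complex.I • fromBlocks (1 : Matrix ι ι ℂ) 0 0 (-1 : Matrix ι ι ℂ)) =
      fromBlocks ((t * Complex.I) • (1 : Matrix ι ι ℂ)) 0 0 (-((t * Complex.I) • 1)) := by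
  rw [← Complex.coe_smul, smul_smul, fromBlocks_smul]
  simp

variable [Fintype ι]

theorem commute_fromBlocks_one_neg_one_iff (M : Matrix (ι ⊕ ι) (ι ⊕ ι) ℂ) :
    fromBlocks 1 0 0 (-1) * M = M * fromBlocks 1 0 0 (-1) ↔ ∃ A B, M = fromBlocks A 0 0 B := by
  rw [← fromBlocks_toBlocks M]
  simp [fromBlocks_multiply, fromBlocks_inj, self_eq_neg, neg_eq_self]

theorem isSUCentralizerDecomposition_fromBlocks [Nonempty ι] :
    IsSUCentralizerDecomposition (fromBlocksDiagonalAlgHom (R := ℂ) (m := ι) (n := ι))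
      (fromBlocks 1 0 0 (-1)) where
  eq_zero_of_add_eq_zero p t hp₁ hp₂ h := by
    obtain ⟨a, b⟩ := p
    rw [smul_I_smul_fromBlocks_one_neg_one, fromBlocksDiagonalAlgHom_apply, fromBlocks_add,
      ← fromBlocks_zero, fromBlocks_inj] at h
    have htrace := congrArg trace h.1
    simp only [trace_add, trace_smul, trace_one, hp₁.2, trace_zero, smul_eq_mul, zero_add,
      mul_eq_zero, Complex.I_ne_zero, or_false, Nat.cast_eq_zero, Fintype.card_ne_zero,
      Complex.ofReal_eq_zero] at htrace
    subst htrace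
    simp only [Complex.ofReal_zero, zero_mul, zero_smul, add_zero, neg_zero] at h
    exact ⟨Prod.ext h.1 h.2.2.2, rfl⟩
  mem_centralizer_iff M := by
    constructor
    · rintro ⟨hM, hcomm⟩
      obtain ⟨A, B, rfl⟩ := (commute_fromBlocks_one_neg_one_iff M).1 hcomm
      obtain ⟨hA, hB, htr⟩ := (fromBlocks_mem_su_iff A B).1 hM
      set t : ℝ := A.trace.im / Fintype.card ι
      have htrace : (((t : ℂ) * Complex.I) • (1 : Matrix ι ι ℂ)).trace = A.trace := by
        rw [trace_eq_im_mul_I_of_conjTranspose_eq_neg hA, trace_smul, trace_one, smul_eq_mul]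
        push_cast [t]
        field_simp
      refine ⟨(A - (t * Complex.I) • 1, B + (t * Complex.I) • 1), t, ⟨?_, ?_⟩, ⟨?_, ?_⟩, ?_⟩
      · rw [conjTranspose_sub, hA, conjTranspose_ofReal_mul_I_smul_one, neg_sub', sub_neg_eq_add]
      · rw [trace_sub, htrace, sub_self]
      · rw [conjTranspose_add, hB, conjTranspose_ofReal_mul_I_smul_one, neg_add]
      · rw [trace_add, htrace]
        linear_combination htr
      · rw [smul_I_smul_fromBlocks_one_neg_one, fromBlocksDiagonalAlgHom_apply, fromBlocks_add]
        simp
    · rintro ⟨⟨a, b⟩, t, ha, hb, rfl⟩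
      rw [smul_I_smul_fromBlocks_one_neg_one, fromBlocksDiagonalAlgHom_apply, fromBlocks_add,
        add_zero]
      refine ⟨(fromBlocks_mem_su_iff _ _).2 ⟨?_, ?_, ?_⟩,
        (commute_fromBlocks_one_neg_one_iff _).2 ⟨_, _, rfl⟩⟩
      · rw [conjTranspose_add, ha.1, conjTranspose_ofReal_mul_I_smul_one, neg_add]
      · rw [conjTranspose_add, conjTranspose_neg, hb.1, conjTranspose_ofReal_mul_I_smul_one,
          neg_add]
      · rw [trace_add, trace_add, trace_neg, ha.2, hb.2]
        ring

end SignCentralizer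

section Transport

variable {ι κ κ' : Type*} [Fintype κ] [Fintype κ']

theorem StarAlgEquiv.map_mem_su_iff (φ : Matrix κ κ ℂ ≃⋆ₐ[ℂ] Matrix κ' κ' ℂ)
    (hφ : ∀ A, (φ A).trace = A.trace) {A : Matrix κ κ ℂ} : φ A ∈ su κ' ↔ A ∈ su κ := by
  change (φ A)ᴴ = -(φ A) ∧ (φ A).trace = 0 ↔ Aᴴ = -A ∧ A.trace = 0
  rw [hφ, ← star_eq_conjTranspose, ← star_eq_conjTranspose, ← map_star, ← map_neg,
    (EquivLike.injective φ).eq_iff]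

variable [Fintype ι] [DecidableEq ι] [DecidableEq κ] [DecidableEq κ']

theorem IsSUCentralizerDecomposition.map {Ψ : Matrix ι ι ℂ × Matrix ι ι ℂ →ₐ[ℂ] Matrix κ κ ℂ}
    {P : Matrix κ κ ℂ} (h : IsSUCentralizerDecomposition Ψ P)
    (φ : Matrix κ κ ℂ ≃⋆ₐ[ℂ] Matrix κ' κ' ℂ) (hφ : ∀ A, (φ A).trace = A.trace) :
    IsSUCentralizerDecomposition (φ.toAlgEquiv.toAlgHom.comp Ψ) (φ P) := by
  have hφ_add (p : Matrix ι ι ℂ × Matrix ι ι ℂ) (t : ℝ) :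
      φ (Ψ p + t • (Complex.I • P)) = φ (Ψ p) + t • (Complex.I • φ P) := by
    simp only [map_add, ← Complex.coe_smul, map_smul]
  refine ⟨fun p t hp₁ hp₂ hzero => h.eq_zero_of_add_eq_zero p t hp₁ hp₂ ?_, fun M => ?_⟩
  · apply EquivLike.injective φ
    rw [hφ_add, map_zero]
    exact hzero
  · obtain ⟨N, rfl⟩ := EquivLike.surjective φ M
    rw [φ.map_mem_su_iff hφ, ← map_mul, ← map_mul, (EquivLike.injective φ).eq_iff,
      h.mem_centralizer_iff]
    simp only [AlgHom.comp_apply, AlgEquiv.coe_toAlgHom, StarAlgEquiv.coe_toAlgEquiv, ← hφ_add,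
      (EquivLike.injective φ).eq_iff]

end Transport

section StarAlgEquivs

variable {R n : Type*} [Fintype n] [DecidableEq n]

theorem trace_conjStarAlgAut [CommRing R] [StarRing R] (u : unitary (Matrix n n R))
    (A : Matrix n n R) : (Unitary.conjStarAlgAut R _ u A).trace = A.trace := by
  rw [Unitary.conjStarAlgAut_apply, trace_mul_cycle, Unitary.coe_star_mul_self, one_mul]

variable {m : Type*} [Fintype m] [DecidableEq m] [CommSemiring R] [StarRing R]

def reindexStarAlgEquiv (e : m ≃ n) : Matrix m m R ≃⋆ₐ[R] Matrix n n R :=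
  StarAlgEquiv.ofAlgEquiv (reindexAlgEquiv R R e) fun A => (conjTranspose_reindex e e A).symm

theorem reindexStarAlgEquiv_apply (e : m ≃ n) (A : Matrix m m R) :
    reindexStarAlgEquiv e A = reindex e e A :=
  rfl

theorem trace_reindexStarAlgEquiv (e : m ≃ n) (A : Matrix m m R) :
    (reindexStarAlgEquiv e A).trace = A.trace :=
  e.symm.sum_comp fun i => A i i

end StarAlgEquivs

theorem sqrt_two_inv_mul_self : (Real.sqrt 2 : ℂ)⁻¹ * (Real.sqrt 2 : ℂ)⁻¹ = 2⁻¹ := by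
  rw [← mul_inv, ← Complex.ofReal_mul, Real.mul_self_sqrt zero_le_two]
  norm_num

noncomputable def hadamardBlock (ι : Type*) [DecidableEq ι] : Matrix (ι ⊕ ι) (ι ⊕ ι) ℂ :=
  (Real.sqrt 2 : ℂ)⁻¹ • fromBlocks 1 1 1 (-1)

section Hadamard

variable {ι : Type*} [DecidableEq ι]

theorem conjTranspose_hadamardBlock : (hadamardBlock ι)ᴴ = hadamardBlock ι := by
  simp [hadamardBlock, fromBlocks_conjTranspose]

variable [Fintype ι]

theorem hadamardBlock_mul_self : hadamardBlock ι * hadamardBlock ι = 1 := by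
  simp only [hadamardBlock, smul_mul_smul_comm, fromBlocks_multiply, sqrt_two_inv_mul_self]
  rw [← fromBlocks_one]
  simp only [mul_one, mul_neg, neg_neg, add_neg_cancel, fromBlocks_smul, smul_zero,
    ← two_smul ℂ (1 : Matrix ι ι ℂ), smul_smul]
  norm_num

theorem hadamardBlock_mem_unitary : hadamardBlock ι ∈ unitary (Matrix (ι ⊕ ι) (ι ⊕ ι) ℂ) := by
  rw [Unitary.mem_iff, star_eq_conjTranspose, conjTranspose_hadamardBlock, and_self,
    hadamardBlock_mul_self]

theorem hadamardBlock_mul_mul_hadamardBlock :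
    hadamardBlock ι * fromBlocks 1 0 0 (-1) * hadamardBlock ι = fromBlocks 0 1 1 0 := by
  simp only [hadamardBlock, Matrix.smul_mul, Matrix.mul_smul, smul_smul, fromBlocks_multiply,
    sqrt_two_inv_mul_self]
  simp only [mul_one, mul_neg, neg_neg, mul_zero, add_zero, zero_add, add_neg_cancel,
    fromBlocks_smul, ← two_smul ℂ (1 : Matrix ι ι ℂ), smul_smul]
  norm_num

end Hadamard

def qubitSplitEquiv (m : ℕ) : (Fin m → Fin 2) ⊕ (Fin m → Fin 2) ≃ (Fin (m + 1) → Fin 2) :=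
  (Equiv.boolProdEquivSum _).symm.trans
    ((Equiv.prodCongr finTwoEquiv.symm (Equiv.refl _)).trans (Fin.consEquiv fun _ => Fin 2))

theorem qubitSplitEquiv_inl (m : ℕ) (x : Fin m → Fin 2) :
    qubitSplitEquiv m (.inl x) = Fin.cons 0 x :=
  rfl

theorem qubitSplitEquiv_inr (m : ℕ) (x : Fin m → Fin 2) :
    qubitSplitEquiv m (.inr x) = Fin.cons 1 x :=
  rfl

theorem qubitSplitEquiv_inl_add_single {m : ℕ} (x : Fin m → Fin 2) :
    qubitSplitEquiv m (.inl x) + Pi.single 0 1 = qubitSplitEquiv m (.inr x) := by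
  funext j
  cases j using Fin.cases <;> simp [qubitSplitEquiv_inl, qubitSplitEquiv_inr]

theorem qubitSplitEquiv_inr_add_single {m : ℕ} (x : Fin m → Fin 2) :
    qubitSplitEquiv m (.inr x) + Pi.single 0 1 = qubitSplitEquiv m (.inl x) := by
  funext j
  cases j using Fin.cases <;> simp [qubitSplitEquiv_inl, qubitSplitEquiv_inr]

theorem exists_isSUCentralizerDecomposition_pauliString_all_X (m : ℕ) :
    ∃ Ψ : Matrix (Fin (2 ^ m)) (Fin (2 ^ m)) ℂ × Matrix (Fin (2 ^ m)) (Fin (2 ^ m)) ℂ →ₐ[ℂ]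
        Matrix (Fin (m + 1) → Fin 2) (Fin (m + 1) → Fin 2) ℂ,
      IsSUCentralizerDecomposition Ψ (pauliString fun _ => 1) := by
  let f : Fin (2 ^ m) ≃ (Fin m → Fin 2) := (Fintype.equivFinOfCardEq (by simp)).symm
  let e := (Equiv.sumCongr f f).trans (qubitSplitEquiv m)
  let H : unitary (Matrix _ _ ℂ) := ⟨hadamardBlock (Fin (2 ^ m)), hadamardBlock_mem_unitary⟩
  let U : unitary (Matrix _ _ ℂ) := ⟨_, permMatrix_mem_unitary (cnotFan m).toEquiv⟩
  have hX₁ : reindexStarAlgEquiv e (fromBlocks 0 1 1 0) =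
      pauliString fun j => if (j : ℕ) = 0 then 1 else 0 := by
    rw [pauliString_single_X_eq_translationMatrix,
      ← submatrix_translationMatrix_eq_fromBlocks e (Pi.single 0 1)
        (fun x => qubitSplitEquiv_inl_add_single (f x))
        (fun x => qubitSplitEquiv_inr_add_single (f x))]
    simp [reindexStarAlgEquiv_apply, submatrix_submatrix]
  have hP : Unitary.conjStarAlgAut ℂ _ U
      (reindexStarAlgEquiv e (Unitary.conjStarAlgAut ℂ _ H (fromBlocks 1 0 0 (-1)))) =
        pauliString fun _ => 1 := by
    simp only [Unitary.conjStarAlgAut_apply, star_eq_conjTranspose, H, U,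
      conjTranspose_hadamardBlock, hadamardBlock_mul_mul_hadamardBlock, hX₁,
      permMatrix_cnotFan_conj_pauliString_single_X]
  exact ⟨_, hP ▸ ((isSUCentralizerDecomposition_fromBlocks.map _ (trace_conjStarAlgAut H)).map
    _ (trace_reindexStarAlgEquiv e)).map _ (trace_conjStarAlgAut U)⟩

/-- There is a unitary `U` with `U X₁ U† = X^{⊗n}`; consequently the centralizer of `X^{⊗n}`
in `su(2ⁿ)`, modulo the span of `i·X^{⊗n}`, is isomorphic to `su(2^{n−1}) ⊕ su(2^{n−1})`:
there is a real-linear bracket-preserving map `Ψ` from pairs of `2^{n-1}`-matrices such that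
every element of the centralizer decomposes uniquely as `Ψ(a,b) + t·i·X^{⊗n}` with
`a, b ∈ su(2^{n−1})`, `t ∈ ℝ`. -/
theorem conj_X1_to_Xall_and_centralizer (n : ℕ) (hn : 1 ≤ n) :
    (∃ U : Matrix (Fin n → Fin 2) (Fin n → Fin 2) ℂ,
        U * Uᴴ = 1 ∧ Uᴴ * U = 1 ∧
        U * pauliString (fun j => if (j : ℕ) = 0 then 1 else 0) * Uᴴ =
          pauliString (fun _ : Fin n => (1 : Fin 4))) ∧
    (∃ Ψ : (Matrix (Fin (2 ^ (n - 1))) (Fin (2 ^ (n - 1))) ℂ ×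
              Matrix (Fin (2 ^ (n - 1))) (Fin (2 ^ (n - 1))) ℂ) →ₗ[ℝ]
            Matrix (Fin n → Fin 2) (Fin n → Fin 2) ℂ,
      (∀ p q : Matrix (Fin (2 ^ (n - 1))) (Fin (2 ^ (n - 1))) ℂ ×
              Matrix (Fin (2 ^ (n - 1))) (Fin (2 ^ (n - 1))) ℂ,
          (p.1ᴴ = -p.1 ∧ p.1.trace = 0) → (p.2ᴴ = -p.2 ∧ p.2.trace = 0) →
          (q.1ᴴ = -q.1 ∧ q.1.trace = 0) → (q.2ᴴ = -q.2 ∧ q.2.trace = 0) →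
          Ψ ⁅p, q⁆ = ⁅Ψ p, Ψ q⁆) ∧
      (∀ (p : Matrix (Fin (2 ^ (n - 1))) (Fin (2 ^ (n - 1))) ℂ ×
              Matrix (Fin (2 ^ (n - 1))) (Fin (2 ^ (n - 1))) ℂ) (t : ℝ),
          (p.1ᴴ = -p.1 ∧ p.1.trace = 0) → (p.2ᴴ = -p.2 ∧ p.2.trace = 0) →
          Ψ p + t • (Complex.I • pauliString (fun _ : Fin n => (1 : Fin 4))) = 0 →
          p = 0 ∧ t = 0) ∧
      (∀ m : Matrix (Fin n → Fin 2) (Fin n → Fin 2) ℂ,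
          ((mᴴ = -m ∧ m.trace = 0) ∧
              pauliString (fun _ : Fin n => (1 : Fin 4)) * m =
                m * pauliString (fun _ : Fin n => (1 : Fin 4))) ↔
            ∃ (p : Matrix (Fin (2 ^ (n - 1))) (Fin (2 ^ (n - 1))) ℂ ×
                Matrix (Fin (2 ^ (n - 1))) (Fin (2 ^ (n - 1))) ℂ) (t : ℝ),
              (p.1ᴴ = -p.1 ∧ p.1.trace = 0) ∧ (p.2ᴴ = -p.2 ∧ p.2.trace = 0) ∧
              m = Ψ p + t • (Complex.I • pauliString (fun _ : Fin n => (1 : Fin 4))))) := by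
  obtain ⟨m, rfl⟩ : ∃ m, n = m + 1 := ⟨n - 1, by omega⟩
  obtain ⟨hU₁, hU₂⟩ := Unitary.mem_iff.1 (permMatrix_mem_unitary (R := ℂ) (cnotFan m).toEquiv)
  obtain ⟨Ψ, hΨ⟩ := exists_isSUCentralizerDecomposition_pauliString_all_X m
  exact ⟨⟨_, hU₂, hU₁, permMatrix_cnotFan_conj_pauliString_single_X m⟩,
    Ψ.toLinearMap.restrictScalars ℝ, fun p q _ _ _ _ => by simp [Ring.lie_def],
    hΨ.eq_zero_of_add_eq_zero, hΨ.mem_centralizer_iff⟩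
end
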